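/- Let 0 < ε ≤ 2·arcsinh(1), let a := arcsinh(√(cosh(ε/4))), and let h > 0 be the unique positive real satisfying sinh(h)·sinh(ε/2) = cosh(a). Then h > a, and hence 2h > 2a > ε. -/
import Mathlib


/-- With `0 < ε ≤ 2·arcsinh 1`, `a = arcsinh √(cosh(ε/4))`, and `h > 0` the
solution of the pentagon formula `sinh h · sinh(ε/2) = cosh a`, one has
`h > a`, hence `2h > 2a > ε`. -/
theorem stmt_7 (ε a h : ℝ) (hε1 : 0 < ε) (hε2 : ε ≤ 2 * Real.arsinh 1)
    (ha : a = Real.arsinh (Real.sqrt (Real.cosh (ε / 4)))) (hh : 0 < h)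
    (heq : Real.sinh h * Real.sinh (ε / 2) = Real.cosh a) :
    a < h ∧ 2 * a < 2 * h ∧ ε < 2 * a := by
  have hs0 : 0 < Real.sinh (ε / 2) := by
    rw [Real.sinh_pos_iff]; linarith
  have hs1 : Real.sinh (ε / 2) ≤ 1 := by
    have : Real.sinh (ε / 2) ≤ Real.sinh (Real.arsinh 1) := by
      rw [Real.sinh_le_sinh]; linarith
    rwa [Real.sinh_arsinh] at this
  have hsa : Real.sinh a = Real.sqrt (Real.cosh (ε / 4)) := by
    rw [ha, Real.sinh_arsinh]
  have hcosh1 : 1 < Real.cosh (ε / 4) := by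
    have := Real.one_lt_cosh.mpr (by positivity : (ε / 4 : ℝ) ≠ 0)
    exact this
  have hsa1 : 1 < Real.sinh a := by
    rw [hsa]
    have : Real.sqrt 1 < Real.sqrt (Real.cosh (ε / 4)) :=
      Real.sqrt_lt_sqrt (by norm_num) hcosh1
    simpa using this
  have hah : a < h := by
    have key : Real.sinh a * Real.sinh (ε / 2) < Real.sinh h * Real.sinh (ε / 2) := by
      rw [heq]
      calc Real.sinh a * Real.sinh (ε / 2) ≤ Real.sinh a * 1 := by
            apply mul_le_mul_of_nonneg_left hs1 (by linarith)
        _ = Real.sinh a := by ring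
        _ < Real.cosh a := Real.sinh_lt_cosh a
    have := lt_of_mul_lt_mul_right key hs0.le
    rwa [Real.sinh_lt_sinh] at this
  have hea : ε < 2 * a := by
    have : Real.sinh (ε / 2) < Real.sinh a := lt_of_le_of_lt hs1 hsa1
    rw [Real.sinh_lt_sinh] at this
    linarith
  exact ⟨hah, by linarith, hea⟩
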